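/- Let D be open, let F = (F_K)_K be a C¹ stem function on D, and let f = ℐ(F). The following are equivalent: (i) F is holomorphic, i.e. for every h and every K with h ∉ K, ∂F_K/∂α_h = ∂F_{K∪{h}}/∂β_h and ∂F_K/∂β_h = −∂F_{K∪{h}}/∂α_h on D; (ii) ∂f/∂x_h^c = 0 on Ω_D for every h ∈ {1,…,n}; (iii) there exists J ∈ 𝕊 such that the restriction f_J satisfies ∂f_J/∂α_h + J·∂f_J/∂β_h = 0 on Ω_D(J) for all h, where points of (ℂ_J)ⁿ are written (α₁+Jβ₁,…,αₙ+Jβₙ); (iv) for every J ∈ 𝕊, f_J satisfies the equations in (iii). -/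

import Mathlib

noncomputable section

abbrev ℍ := Quaternion ℝ

/-- The sphere of quaternionic imaginary units. -/
def Sph : Set ℍ := {J | J ^ 2 = -1}

/-- The complex slice `ℂ_J = {a + b J : a b : ℝ}`. -/
def CJ (J : ℍ) : Set ℍ := {x | ∃ a b : ℝ, x = (a : ℍ) + (b : ℍ) * J}

variable {n : ℕ}

/-- Conjugation of the `h`-th complex coordinate. -/
def conjCoord (h : Fin n) (z : Fin n → ℂ) : Fin n → ℂ :=
  Function.update z h (starRingEnd ℂ (z h))

/-- Quaternionic conjugation of the coordinates with index in `H`. -/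
def conjQ (H : Finset (Fin n)) (x : Fin n → ℍ) : Fin n → ℍ :=
  fun h => if h ∈ H then star (x h) else x h

/-- Ordered product `J_K` of the values of `J` over `K`, in increasing index order. -/
def JK (J : Fin n → ℍ) (K : Finset (Fin n)) : ℍ :=
  ((K.sort (· ≤ ·)).map J).prod

/-- The complex point with coordinates `α h + i β h`. -/
def zOf (α β : Fin n → ℝ) : Fin n → ℂ :=
  fun h => (α h : ℂ) + (β h : ℂ) * Complex.I

/-- The quaternionic point with coordinates `α h + β h * J h`. -/
def ptOf (α β : Fin n → ℝ) (J : Fin n → ℍ) : Fin n → ℍ :=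
  fun h => (α h : ℍ) + (β h : ℍ) * J h

/-- The circularization `Ω_D` of `D ⊆ ℂⁿ` in `ℍⁿ`. -/
def OmegaD (D : Set (Fin n → ℂ)) : Set (Fin n → ℍ) :=
  {x | ∃ α β : Fin n → ℝ, ∃ J : Fin n → ℍ,
    (∀ h, J h ∈ Sph) ∧ x = ptOf α β J ∧ zOf α β ∈ D}

/-- Invariance of `D` under all coordinatewise complex conjugations. -/
def ConjInv (D : Set (Fin n → ℂ)) : Prop :=
  ∀ h : Fin n, ∀ z ∈ D, conjCoord h z ∈ D

/-- Stem function condition for a family `F = (F_K)`. -/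
def IsStem (D : Set (Fin n → ℂ)) (F : Finset (Fin n) → (Fin n → ℂ) → ℍ) : Prop :=
  ∀ (K : Finset (Fin n)) (h : Fin n), ∀ z ∈ D,
    F K (conjCoord h z) = (if h ∈ K then -1 else 1) * F K z

/-- `f` is the slice function induced by the stem function `F` on `Ω_D`. -/
def Induces (D : Set (Fin n → ℂ)) (F : Finset (Fin n) → (Fin n → ℂ) → ℍ)
    (f : (Fin n → ℍ) → ℍ) : Prop :=
  ∀ (α β : Fin n → ℝ) (J : Fin n → ℍ), (∀ h, J h ∈ Sph) → zOf α β ∈ D →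
    f (ptOf α β J) = ∑ K : Finset (Fin n), JK J K * F K (zOf α β)

/-- `f` is a slice function on `Ω_D`. -/
def IsSlice (D : Set (Fin n → ℂ)) (f : (Fin n → ℍ) → ℍ) : Prop :=
  ∃ F, IsStem D F ∧ Induces D F f

/-- Each component of the stem function is of class `C¹` on `D`. -/
def StemC1 (D : Set (Fin n → ℂ)) (F : Finset (Fin n) → (Fin n → ℂ) → ℍ) : Prop :=
  ∀ K, ContDiffOn ℝ 1 (F K) D

/-- Holomorphy (Cauchy–Riemann system) of a stem function. -/
def StemHolo (D : Set (Fin n → ℂ)) (F : Finset (Fin n) → (Fin n → ℂ) → ℍ) : Prop :=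
  ∀ z ∈ D, ∀ h : Fin n, ∀ K : Finset (Fin n), h ∉ K →
    fderiv ℝ (F K) z (Pi.single h 1) =
      fderiv ℝ (F (insert h K)) z (Pi.single h Complex.I) ∧
    fderiv ℝ (F K) z (Pi.single h Complex.I) =
      -fderiv ℝ (F (insert h K)) z (Pi.single h 1)

/-- `f` is a slice regular function on `Ω_D`. -/
def IsSliceRegular (D : Set (Fin n → ℂ)) (f : (Fin n → ℍ) → ℍ) : Prop :=
  ∃ F, IsStem D F ∧ StemC1 D F ∧ StemHolo D F ∧ Induces D F f

/-- Pointwise product of stem functions associated with `σ`. -/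
def SP (σ : Finset (Fin n) → Finset (Fin n) → ℝ)
    (F G : Finset (Fin n) → (Fin n → ℂ) → ℍ) :
    Finset (Fin n) → (Fin n → ℂ) → ℍ :=
  fun K z => ∑ H : Finset (Fin n), ∑ L : Finset (Fin n),
    if symmDiff H L = K then σ H L • (F H z * G L z) else 0

/-- The tensor-product sign function `σ_⊗(K,H) = (-1)^{|K∩H|}`. -/
def sigmaT : Finset (Fin n) → Finset (Fin n) → ℝ :=
  fun K H => (-1 : ℝ) ^ (K ∩ H).card

/-- The tensor (slice) product of stem functions. -/
def SPT (F G : Finset (Fin n) → (Fin n → ℂ) → ℍ) :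
    Finset (Fin n) → (Fin n → ℂ) → ℍ := SP sigmaT F G

/-- The stem function `∂_h F`. -/
def Dplus (F : Finset (Fin n) → (Fin n → ℂ) → ℍ) (h : Fin n) :
    Finset (Fin n) → (Fin n → ℂ) → ℍ :=
  fun K z => (2 : ℝ)⁻¹ • (fderiv ℝ (F K) z (Pi.single h 1) +
    ((-1 : ℝ) ^ (K ∩ {h}).card) •
      fderiv ℝ (F (symmDiff K {h})) z (Pi.single h Complex.I))

/-- The stem function `∂̄_h F`. -/
def Dminus (F : Finset (Fin n) → (Fin n → ℂ) → ℍ) (h : Fin n) :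
    Finset (Fin n) → (Fin n → ℂ) → ℍ :=
  fun K z => (2 : ℝ)⁻¹ • (fderiv ℝ (F K) z (Pi.single h 1) -
    ((-1 : ℝ) ^ (K ∩ {h}).card) •
      fderiv ℝ (F (symmDiff K {h})) z (Pi.single h Complex.I))

/-- The ordered monomial function `x ↦ x^ℓ a = x₁^{ℓ₁} ⋯ xₙ^{ℓₙ} a`. -/
def mono (ℓ : Fin n → ℕ) (a : ℍ) (x : Fin n → ℍ) : ℍ :=
  (List.ofFn fun h => x h ^ ℓ h).prod * a

/-- The coordinatewise map `φ_J : ℂⁿ → (ℂ_J)ⁿ ⊆ ℍⁿ`. -/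
def phiJ (J : ℍ) (z : Fin n → ℂ) : Fin n → ℍ :=
  fun h => ((z h).re : ℍ) + ((z h).im : ℍ) * J

/-- The standard basis vector `e_K` of `ℝ^{𝒫(n)}`. -/
def eB (K : Finset (Fin n)) : Finset (Fin n) → ℝ := Pi.single K 1

/-- The `Δ`-product on `ℝ^{𝒫(n)}` associated with `σ`. -/
def deltaMulR (σ : Finset (Fin n) → Finset (Fin n) → ℝ)
    (v w : Finset (Fin n) → ℝ) : Finset (Fin n) → ℝ :=
  fun K => ∑ H : Finset (Fin n), ∑ L : Finset (Fin n),
    if symmDiff H L = K then σ H L * v H * w L else 0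

/-! On a slice `ℂ_J`, `f_J = ∑_K J^{|K|} F_K`; reindexing the `β_h`-derivative by `K ↦ K △ {h}`
gives `∂f_J/∂α_h + J ∂f_J/∂β_h = 2 ∑_K J^{|K|} (∂̄_h F)_K`, and (i) says exactly that every
`∂̄_h F` vanishes. This yields (i) ⇒ (ii) ⇒ (iv) ⇒ (iii). For (iii) ⇒ (i): `∂̄_h F` is again a
stem function, so evaluating (iii) at the coordinate conjugates of `z` gives
`∑_K (-1)^{|K ∩ H|} J^{|K|} (∂̄_h F)_K(z) = 0` for every `H`, and inverting this Walsh–Hadamard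
transform over the power set gives `(∂̄_h F)_K(z) = 0`. -/

open Finset Topology

section SignCharacters

variable {γ : Type*} [DecidableEq γ]

lemma neg_one_pow_card_inter_eq_prod (A H : Finset γ) :
    (-1 : ℝ) ^ (A ∩ H).card = ∏ k ∈ H, if k ∈ A then -1 else 1 := by
  rw [prod_ite_mem, prod_const, inter_comm]

lemma neg_one_pow_card_inter_mul (A B H : Finset γ) :
    (-1 : ℝ) ^ (A ∩ H).card * (-1) ^ (B ∩ H).card = (-1) ^ (symmDiff A B ∩ H).card := by
  simp only [neg_one_pow_card_inter_eq_prod, ← prod_mul_distrib]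
  refine prod_congr rfl fun k _ => ?_
  by_cases hA : k ∈ A <;> by_cases hB : k ∈ B <;> simp [mem_symmDiff, hA, hB]

lemma neg_one_pow_card_inter_singleton (K : Finset γ) (h : γ) :
    (-1 : ℝ) ^ (K ∩ {h}).card = if h ∈ K then -1 else 1 := by
  rw [neg_one_pow_card_inter_eq_prod, prod_singleton]

lemma symmDiff_singleton_of_mem {K : Finset γ} {h : γ} (hK : h ∈ K) :
    symmDiff K {h} = K.erase h := by
  ext a
  by_cases ha : a = h <;> simp [mem_symmDiff, ha, hK]

lemma symmDiff_singleton_of_notMem {K : Finset γ} {h : γ} (hK : h ∉ K) :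
    symmDiff K {h} = insert h K := by
  ext a
  by_cases ha : a = h <;> simp [mem_symmDiff, ha, hK]

variable [Fintype γ]

lemma sum_neg_one_pow_card_inter (A : Finset γ) :
    ∑ H : Finset γ, (-1 : ℝ) ^ (A ∩ H).card =
      if A = ∅ then 2 ^ Fintype.card γ else 0 := by
  simp only [neg_one_pow_card_inter_eq_prod]
  rw [← powerset_univ, ← prod_one_add]
  split_ifs with hA
  · simp [hA, one_add_one_eq_two, card_univ]
  · obtain ⟨a, ha⟩ := nonempty_iff_ne_empty.2 hA
    exact prod_eq_zero (mem_univ a) (by simp [ha])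

lemma eq_zero_of_forall_sum_neg_one_pow_smul_eq_zero {M : Type*} [AddCommGroup M]
    [Module ℝ M] {a : Finset γ → M}
    (ha : ∀ H : Finset γ, ∑ K : Finset γ, (-1 : ℝ) ^ (K ∩ H).card • a K = 0)
    (K₀ : Finset γ) : a K₀ = 0 := by
  have hdouble : ∑ H : Finset γ, (-1 : ℝ) ^ (K₀ ∩ H).card •
      ∑ K : Finset γ, (-1 : ℝ) ^ (K ∩ H).card • a K = (2 : ℝ) ^ Fintype.card γ • a K₀ := by
    simp only [smul_sum, smul_smul, neg_one_pow_card_inter_mul]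
    rw [sum_comm]
    simp only [← sum_smul, sum_neg_one_pow_card_inter, ite_smul, zero_smul, symmDiff_eq_empty,
      sum_ite_eq, mem_univ, if_true]
  simpa [ha] using hdouble.symm

end SignCharacters

lemma Sph_nonempty : Sph.Nonempty := by
  set i : ℍ := ⟨0, 1, 0, 0⟩
  refine ⟨i, ?_⟩
  show i ^ 2 = -1
  rw [Quaternion.sq_eq_neg_normSq.2 rfl, Quaternion.normSq_def']
  norm_num [i]

lemma ne_zero_of_mem_Sph {J : ℍ} (hJ : J ∈ Sph) : J ≠ 0 := by
  rintro rfl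
  simp [Sph] at hJ

lemma JK_const (J : ℍ) (K : Finset (Fin n)) : JK (fun _ => J) K = J ^ K.card := by
  rw [JK, List.map_const', List.prod_replicate, length_sort]

lemma pow_card_symmDiff_singleton_succ {J : ℍ} (hJ : J ∈ Sph) (K : Finset (Fin n))
    (h : Fin n) :
    J ^ ((symmDiff K {h}).card + 1) = -((-1 : ℝ) ^ (K ∩ {h}).card • J ^ K.card) := by
  have hJ2 : J ^ 2 = -1 := hJ
  rw [neg_one_pow_card_inter_singleton]
  by_cases hK : h ∈ K
  · obtain ⟨m, hm⟩ : ∃ m, K.card = m + 1 := ⟨_, (card_erase_add_one hK).symm⟩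
    rw [symmDiff_singleton_of_mem hK, card_erase_of_mem hK, hm, if_pos hK]
    simp
  · rw [symmDiff_singleton_of_notMem hK, card_insert_of_notMem hK, if_neg hK, pow_add, pow_one,
      pow_succ, mul_assoc, ← sq, hJ2]
    simp

section SliceDerivatives

variable {D : Set (Fin n → ℂ)} {F : Finset (Fin n) → (Fin n → ℂ) → ℍ}
  {f : (Fin n → ℍ) → ℍ}

lemma zOf_re_im (z : Fin n → ℂ) : zOf (fun h => (z h).re) (fun h => (z h).im) = z := by
  funext h
  simp [zOf, Complex.re_add_im]

lemma Induces.apply_phiJ (hf : Induces D F f) {J : ℍ} (hJ : J ∈ Sph) {z : Fin n → ℂ}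
    (hz : z ∈ D) : f (phiJ J z) = ∑ K : Finset (Fin n), J ^ K.card * F K z := by
  have hpt : phiJ J z = ptOf (fun h => (z h).re) (fun h => (z h).im) (fun _ => J) := rfl
  rw [hpt, hf _ _ _ (fun _ => hJ) ((zOf_re_im z).symm ▸ hz)]
  simp only [JK_const, zOf_re_im]

lemma Induces.fderiv_phiJ (hD : IsOpen D) (hC1 : StemC1 D F) (hf : Induces D F f) {J : ℍ}
    (hJ : J ∈ Sph) {z : Fin n → ℂ} (hz : z ∈ D) (v : Fin n → ℂ) :
    fderiv ℝ (fun w => f (phiJ J w)) z v =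
      ∑ K : Finset (Fin n), J ^ K.card * fderiv ℝ (F K) z v := by
  have hdiff : ∀ K, DifferentiableAt ℝ (F K) z := fun K =>
    ((hC1 K).differentiableOn one_ne_zero).differentiableAt (hD.mem_nhds hz)
  have hloc : (fun w => f (phiJ J w)) =ᶠ[𝓝 z]
      fun w => ∑ K : Finset (Fin n), J ^ K.card * F K w :=
    Filter.eventually_of_mem (hD.mem_nhds hz) fun w hw => hf.apply_phiJ hJ hw
  rw [hloc.fderiv_eq, fderiv_fun_sum fun K _ => (hdiff K).const_mul _]
  simp [fderiv_const_mul (hdiff _)]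

lemma Induces.fderiv_phiJ_add_mul_fderiv_phiJ (hD : IsOpen D) (hC1 : StemC1 D F)
    (hf : Induces D F f) {J : ℍ} (hJ : J ∈ Sph) {z : Fin n → ℂ} (hz : z ∈ D) (h : Fin n) :
    fderiv ℝ (fun w => f (phiJ J w)) z (Pi.single h 1) +
        J * fderiv ℝ (fun w => f (phiJ J w)) z (Pi.single h Complex.I) =
      (2 : ℝ) • ∑ K : Finset (Fin n), J ^ K.card * Dminus F h K z := by
  set X : Finset (Fin n) → ℍ := fun K => fderiv ℝ (F K) z (Pi.single h Complex.I)
  have hreindex : ∑ K : Finset (Fin n), J ^ (K.card + 1) * X K =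
      ∑ K : Finset (Fin n), J ^ ((symmDiff K {h}).card + 1) * X (symmDiff K {h}) :=
    (Fintype.sum_bijective (fun K => symmDiff K {h})
      (Function.Involutive.bijective fun K => symmDiff_symmDiff_cancel_right {h} K)
      (fun K => J ^ ((symmDiff K {h}).card + 1) * X (symmDiff K {h}))
      (fun K => J ^ (K.card + 1) * X K) fun _ => rfl).symm
  rw [hf.fderiv_phiJ hD hC1 hJ hz, hf.fderiv_phiJ hD hC1 hJ hz, mul_sum]
  simp only [← mul_assoc, ← pow_succ']
  rw [hreindex, ← sum_add_distrib, smul_sum]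
  refine sum_congr rfl fun K _ => ?_
  rw [pow_card_symmDiff_singleton_succ hJ, Dminus]
  simp only [X, neg_mul, smul_mul_assoc, mul_smul_comm, mul_sub]
  module

end SliceDerivatives

section Conjugation

/-- `conjCoord a` as a linear equivalence: `comp_right_fderiv` then needs no differentiability
at the conjugate point. -/
def conjCoordCLE (a : Fin n) : (Fin n → ℂ) ≃L[ℝ] (Fin n → ℂ) :=
  ContinuousLinearEquiv.piCongrRight fun k =>
    if k = a then Complex.conjCLE else ContinuousLinearEquiv.refl ℝ ℂ

lemma conjCoordCLE_apply (a : Fin n) (z : Fin n → ℂ) : conjCoordCLE a z = conjCoord a z := by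
  funext k
  by_cases hk : k = a
  · subst hk; simp [conjCoordCLE, conjCoord]
  · simp [conjCoordCLE, conjCoord, hk]

lemma conjCoord_single (a k : Fin n) (c : ℂ) :
    conjCoord a (Pi.single k c) = Pi.single k (if k = a then starRingEnd ℂ c else c) := by
  funext j
  by_cases hj : j = a <;> by_cases hk : j = k <;> simp_all [conjCoord]

lemma conjCoord_conjCoord (a : Fin n) (z : Fin n → ℂ) : conjCoord a (conjCoord a z) = z := by
  funext j
  by_cases hj : j = a <;> simp_all [conjCoord]

variable {D : Set (Fin n → ℂ)} {F : Finset (Fin n) → (Fin n → ℂ) → ℍ}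

lemma IsStem.fderiv_conjCoord (hD : IsOpen D) (hF : IsStem D F) (K : Finset (Fin n)) (a : Fin n)
    {z : Fin n → ℂ} (hz : z ∈ D) (v : Fin n → ℂ) :
    fderiv ℝ (F K) (conjCoord a z) v =
      (-1 : ℝ) ^ (K ∩ {a}).card • fderiv ℝ (F K) z (conjCoord a v) := by
  have hloc : F K ∘ conjCoordCLE a =ᶠ[𝓝 z] (-1 : ℝ) ^ (K ∩ {a}).card • F K :=
    Filter.eventually_of_mem (hD.mem_nhds hz) fun w hw => by
      rw [Function.comp_apply, Pi.smul_apply, conjCoordCLE_apply, hF K a w hw,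
        neg_one_pow_card_inter_singleton]
      split_ifs <;> simp
  have hchain := congrArg (· (conjCoord a v))
    ((conjCoordCLE a).comp_right_fderiv (f := F K) (x := z))
  simp only [hloc.fderiv_eq, fderiv_const_smul_field, ContinuousLinearMap.comp_apply,
    ContinuousLinearEquiv.coe_coe, conjCoordCLE_apply, conjCoord_conjCoord] at hchain
  exact hchain.symm

lemma IsStem.dminus (hD : IsOpen D) (hF : IsStem D F) (h : Fin n) : IsStem D (Dminus F h) := by
  intro K a z hz
  have hsingle : ∀ c : ℂ, conjCoord a (Pi.single h c) =
      if h = a then Pi.single h (starRingEnd ℂ c) else Pi.single h c := fun c => by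
    rw [conjCoord_single]; split_ifs <;> rfl
  simp only [Dminus, hF.fderiv_conjCoord hD _ a hz, hsingle, map_one, Complex.conj_I, ite_self,
    neg_one_pow_card_inter_singleton]
  rcases eq_or_ne h a with rfl | ha
  · by_cases hK : h ∈ K
    · simp [hK, mem_symmDiff, Pi.single_neg]
      module
    · simp [hK, mem_symmDiff, Pi.single_neg]
  · by_cases hK : a ∈ K <;> by_cases hh : h ∈ K <;>
      simp [hK, hh, ha, ha.symm, mem_symmDiff] <;> module

end Conjugation

section StemFunctions

variable {D : Set (Fin n → ℂ)} {F : Finset (Fin n) → (Fin n → ℂ) → ℍ}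

lemma IsStem.exists_eq_neg_one_pow_card_inter_smul (hinv : ConjInv D) (hF : IsStem D F)
    (H : Finset (Fin n)) {z : Fin n → ℂ} (hz : z ∈ D) :
    ∃ w ∈ D, ∀ K, F K w = (-1 : ℝ) ^ (K ∩ H).card • F K z := by
  induction H using Finset.induction_on with
  | empty => exact ⟨z, hz, fun K => by simp⟩
  | @insert a H ha ih =>
    obtain ⟨w, hw, hsign⟩ := ih
    refine ⟨conjCoord a w, hinv a w hw, fun K => ?_⟩
    have hcard : (K ∩ insert a H).card = (K ∩ {a}).card + (K ∩ H).card := by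
      rw [insert_eq, inter_union_distrib_left, card_union_of_disjoint]
      exact disjoint_left.2 fun x hx hx' => ha (by simp_all)
    rw [hF K a w hw, hsign, hcard, pow_add, mul_smul, neg_one_pow_card_inter_singleton]
    split_ifs <;> simp

lemma IsStem.eq_zero_of_sum_pow_mul_eq_zero (hinv : ConjInv D) (hF : IsStem D F) {J : ℍ}
    (hJ : J ∈ Sph) (hsum : ∀ w ∈ D, ∑ K : Finset (Fin n), J ^ K.card * F K w = 0)
    {z : Fin n → ℂ} (hz : z ∈ D) (K : Finset (Fin n)) : F K z = 0 := by
  have hpow : J ^ K.card * F K z = 0 := by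
    refine eq_zero_of_forall_sum_neg_one_pow_smul_eq_zero
      (a := fun K => J ^ K.card * F K z) (fun H => ?_) K
    obtain ⟨w, hw, hsign⟩ := hF.exists_eq_neg_one_pow_card_inter_smul hinv H hz
    simpa only [hsign, mul_smul_comm] using hsum w hw
  exact (mul_eq_zero.1 hpow).resolve_left (pow_ne_zero _ (ne_zero_of_mem_Sph hJ))

lemma dminus_of_notMem {h : Fin n} {K : Finset (Fin n)} (hK : h ∉ K) (z : Fin n → ℂ) :
    Dminus F h K z = (2 : ℝ)⁻¹ • (fderiv ℝ (F K) z (Pi.single h 1) -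
      fderiv ℝ (F (insert h K)) z (Pi.single h Complex.I)) := by
  rw [Dminus, neg_one_pow_card_inter_singleton, if_neg hK, one_smul,
    symmDiff_singleton_of_notMem hK]

lemma dminus_insert {h : Fin n} {K : Finset (Fin n)} (hK : h ∉ K) (z : Fin n → ℂ) :
    Dminus F h (insert h K) z = (2 : ℝ)⁻¹ • (fderiv ℝ (F (insert h K)) z (Pi.single h 1) +
      fderiv ℝ (F K) z (Pi.single h Complex.I)) := by
  rw [Dminus, neg_one_pow_card_inter_singleton, if_pos (mem_insert_self h K), neg_one_smul,
    symmDiff_singleton_of_mem (mem_insert_self h K), erase_insert hK, sub_neg_eq_add]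

lemma stemHolo_iff_dminus_eq_zero :
    StemHolo D F ↔ ∀ z ∈ D, ∀ h K, Dminus F h K z = 0 := by
  have htwo : (2 : ℝ)⁻¹ ≠ 0 := by norm_num
  constructor
  · intro hol z hz h K
    by_cases hK : h ∈ K
    · rw [← insert_erase hK, dminus_insert (notMem_erase h K),
        (hol z hz h _ (notMem_erase h K)).2, add_neg_cancel, smul_zero]
    · rw [dminus_of_notMem hK, (hol z hz h K hK).1, sub_self, smul_zero]
  · intro hdbar z hz h K hK
    have h₁ := hdbar z hz h K
    have h₂ := hdbar z hz h (insert h K)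
    rw [dminus_of_notMem hK, smul_eq_zero_iff_right htwo, sub_eq_zero] at h₁
    rw [dminus_insert hK, smul_eq_zero_iff_right htwo, add_comm, add_eq_zero_iff_eq_neg] at h₂
    exact ⟨h₁, h₂⟩

end StemFunctions

theorem stmt12_general (n : ℕ) (D : Set (Fin n → ℂ))
    (hinv : ConjInv D) (hD : IsOpen D)
    (F : Finset (Fin n) → (Fin n → ℂ) → ℍ) (hF : IsStem D F) (hC1 : StemC1 D F)
    (f : (Fin n → ℍ) → ℍ) (hf : Induces D F f) :
    List.TFAE
      [StemHolo D F,
       ∀ h : Fin n, ∀ α β : Fin n → ℝ, ∀ J : Fin n → ℍ,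
         (∀ k, J k ∈ Sph) → zOf α β ∈ D →
         ∑ K : Finset (Fin n), JK J K * Dminus F h K (zOf α β) = 0,
       ∃ J ∈ Sph, ∀ z ∈ D, ∀ h : Fin n,
         fderiv ℝ (fun w => f (phiJ J w)) z (Pi.single h 1) +
           J * fderiv ℝ (fun w => f (phiJ J w)) z (Pi.single h Complex.I) = 0,
       ∀ J ∈ Sph, ∀ z ∈ D, ∀ h : Fin n,
         fderiv ℝ (fun w => f (phiJ J w)) z (Pi.single h 1) +
           J * fderiv ℝ (fun w => f (phiJ J w)) z (Pi.single h Complex.I) = 0] := by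
  tfae_have 1 → 2 := fun hol h α β J _ hz => by
    simp [stemHolo_iff_dminus_eq_zero.1 hol _ hz h]
  tfae_have 2 → 4 := fun hsum J hJ z hz h => by
    have hJz := hsum h _ _ (fun _ => J) (fun _ => hJ) ((zOf_re_im z).symm ▸ hz)
    rw [hf.fderiv_phiJ_add_mul_fderiv_phiJ hD hC1 hJ hz]
    simp only [JK_const, zOf_re_im] at hJz
    rw [hJz, smul_zero]
  tfae_have 4 → 3 := fun hall => Sph_nonempty.elim fun J hJ => ⟨J, hJ, hall J hJ⟩
  tfae_have 3 → 1 := by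
    rintro ⟨J, hJ, hCR⟩
    refine stemHolo_iff_dminus_eq_zero.2 fun z hz h =>
      (hF.dminus hD h).eq_zero_of_sum_pow_mul_eq_zero hinv hJ (fun w hw => ?_) hz
    have hCRw := hCR w hw h
    rwa [hf.fderiv_phiJ_add_mul_fderiv_phiJ hD hC1 hJ hw, smul_eq_zero_iff_right two_ne_zero]
      at hCRw
  tfae_finish

/-- **Characterizations of slice regularity.** -/
theorem stmt12 (n : ℕ) (hn : 0 < n) (D : Set (Fin n → ℂ)) (hne : D.Nonempty)
    (hinv : ConjInv D) (hD : IsOpen D)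
    (F : Finset (Fin n) → (Fin n → ℂ) → ℍ) (hF : IsStem D F) (hC1 : StemC1 D F)
    (f : (Fin n → ℍ) → ℍ) (hf : Induces D F f) :
    List.TFAE
      [StemHolo D F,
       ∀ h : Fin n, ∀ α β : Fin n → ℝ, ∀ J : Fin n → ℍ,
         (∀ k, J k ∈ Sph) → zOf α β ∈ D →
         ∑ K : Finset (Fin n), JK J K * Dminus F h K (zOf α β) = 0,
       ∃ J ∈ Sph, ∀ z ∈ D, ∀ h : Fin n,
         fderiv ℝ (fun w => f (phiJ J w)) z (Pi.single h 1) +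
           J * fderiv ℝ (fun w => f (phiJ J w)) z (Pi.single h Complex.I) = 0,
       ∀ J ∈ Sph, ∀ z ∈ D, ∀ h : Fin n,
         fderiv ℝ (fun w => f (phiJ J w)) z (Pi.single h 1) +
           J * fderiv ℝ (fun w => f (phiJ J w)) z (Pi.single h Complex.I) = 0] :=
  stmt12_general n D hinv hD F hF hC1 f hf
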